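/- arXiv:2408.14336 — 2 statements merged into one kernel-verified Lean document; each statement's English description precedes it below -/
import Mathlib

section
/- Invariance of the History-MDP reward function: for a group-invariant POMDP, for every g ∈ G, every history h ∈ H, and every a ∈ A, one has R̄(g•h, g•a) = R̄(h, a). -/
open scoped NNReal

/-- A group-invariant POMDP over finite types of states `S`, actions `A`,
and observations `Ω`, with a group `G` acting on each. -/
structure GIPOMDP (G S A Ω : Type) [Group G] [MulAction G S] [MulAction G A] [MulAction G Ω]
    [Fintype S] [Fintype A] [Fintype Ω] where
  b0 : S → ℝ≥0
  T : S → A → S → ℝ≥0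
  R : S → A → ℝ
  O0 : S → Ω → ℝ≥0
  O : A → S → Ω → ℝ≥0
  b0_sum : ∑ s, b0 s = 1
  b0_inv : ∀ (g : G) (s : S), b0 (g • s) = b0 s
  T_sum : ∀ (s : S) (a : A), ∑ s', T s a s' = 1
  T_inv : ∀ (g : G) (s : S) (a : A) (s' : S), T (g • s) (g • a) (g • s') = T s a s'
  R_inv : ∀ (g : G) (s : S) (a : A), R (g • s) (g • a) = R s a
  O0_sum : ∀ s : S, ∑ o, O0 s o = 1
  O0_inv : ∀ (g : G) (s : S) (o : Ω), O0 (g • s) (g • o) = O0 s o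
  O_sum : ∀ (a : A) (s' : S), ∑ o, O a s' o = 1
  O_inv : ∀ (g : G) (a : A) (s' : S) (o : Ω), O (g • a) (g • s') (g • o) = O a s' o

/-- A history: an initial observation followed by a list of action–observation pairs. -/
abbrev Hist (A Ω : Type) : Type := Ω × List (A × Ω)

variable {G S A Ω : Type} [Group G] [MulAction G S] [MulAction G A] [MulAction G Ω]
  [Fintype S] [Fintype A] [Fintype Ω]

/-- Componentwise group action on histories. -/
def histAct (g : G) (h : Hist A Ω) : Hist A Ω :=
  (g • h.1, h.2.map fun p => (g • p.1, g • p.2))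

/-- Appending an action–observation pair to a history: `h·(a,o)`. -/
def snocH (h : Hist A Ω) (a : A) (o : Ω) : Hist A Ω :=
  (h.1, h.2 ++ [(a, o)])

/-- Unnormalized filter weight, by recursion on the reversed action–observation list. -/
noncomputable def wRev (P : GIPOMDP G S A Ω) (o0 : Ω) : List (A × Ω) → S → ℝ≥0
  | [] => fun s => P.b0 s * P.O0 s o0
  | (a, o) :: rest => fun s' => (∑ s, wRev P o0 rest s * P.T s a s') * P.O a s' o

/-- Unnormalized filter weight `w_h(s)`: `w_{(o0,[])}(s) = b0(s)·O0(s,o0)` and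
`w_{h·(a,o)}(s') = (Σ_s w_h(s)·T(s,a,s'))·O(a,s',o)`. -/
noncomputable def w (P : GIPOMDP G S A Ω) (h : Hist A Ω) (s : S) : ℝ≥0 :=
  wRev P h.1 h.2.reverse s

/-- Belief `Pr(s|h)`, with the convention that it is `0` when the weights sum to `0`. -/
noncomputable def belief (P : GIPOMDP G S A Ω) (h : Hist A Ω) (s : S) : ℝ≥0 :=
  if 0 < ∑ s', w P h s' then w P h s / ∑ s', w P h s' else 0

/-- Conditional observation probability `Pr(o|h,a) = Σ_s Pr(s|h)·Σ_{s'} T(s,a,s')·O(a,s',o)`. -/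
noncomputable def probObs (P : GIPOMDP G S A Ω) (h : Hist A Ω) (a : A) (o : Ω) : ℝ≥0 :=
  ∑ s, belief P h s * ∑ s', P.T s a s' * P.O a s' o

open Classical in
/-- History-MDP transition function: `T̄(h,a,h') = Pr(o|h,a)` if `h' = h·(a,o)` for some `o`,
and `0` otherwise. -/
noncomputable def Tbar (P : GIPOMDP G S A Ω) (h : Hist A Ω) (a : A) (h' : Hist A Ω) : ℝ≥0 :=
  ∑ o, if h' = snocH h a o then probObs P h a o else 0

/-- History-MDP reward function `R̄(h,a) = Σ_s Pr(s|h)·R(s,a)`. -/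
noncomputable def Rbar (P : GIPOMDP G S A Ω) (h : Hist A Ω) (a : A) : ℝ :=
  ∑ s, (belief P h s : ℝ) * P.R s a

/-- Bellman optimality operator of the History-MDP:
`(BQ)(h,a) = R̄(h,a) + γ·Σ_o Pr(o|h,a)·max_{a'} Q(h·(a,o), a')`. -/
noncomputable def bellman [Nonempty A] (P : GIPOMDP G S A Ω) (γ : ℝ)
    (Q : Hist A Ω × A → ℝ) : Hist A Ω × A → ℝ :=
  fun x => Rbar P x.1 x.2 + γ * ∑ o, (probObs P x.1 x.2 o : ℝ) *
    Finset.univ.sup' Finset.univ_nonempty (fun a' => Q (snocH x.1 x.2 o, a'))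

lemma wRev_invariant (P : GIPOMDP G S A Ω) (g : G) (o0 : Ω) (l : List (A × Ω)) (s : S) :
    wRev P (g • o0) (l.map fun p => (g • p.1, g • p.2)) (g • s) = wRev P o0 l s := by
  induction l generalizing s with
  | nil => simp [wRev, P.b0_inv, P.O0_inv]
  | cons p rest ih =>
    obtain ⟨a, o⟩ := p
    simp only [List.map_cons, wRev]
    rw [P.O_inv]
    congr 1
    rw [← Equiv.sum_comp (MulAction.toPerm g : Equiv.Perm S) (fun s0 =>
      wRev P (g • o0) (rest.map fun p => (g • p.1, g • p.2)) s0 * P.T s0 (g • a) (g • s))]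
    refine Finset.sum_congr rfl fun s0 _ => ?_
    simp [MulAction.toPerm_apply, ih, P.T_inv]

lemma w_invariant (P : GIPOMDP G S A Ω) (g : G) (h : Hist A Ω) (s : S) :
    w P (histAct g h) (g • s) = w P h s := by
  simpa [w, histAct, List.map_reverse] using wRev_invariant P g h.1 h.2.reverse s

lemma belief_invariant (P : GIPOMDP G S A Ω) (g : G) (h : Hist A Ω) (s : S) :
    belief P (histAct g h) (g • s) = belief P h s := by
  have hsum : ∑ s', w P (histAct g h) s' = ∑ s', w P h s' := by
    rw [← Equiv.sum_comp (MulAction.toPerm g : Equiv.Perm S) (fun s' => w P (histAct g h) s')]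
    exact Finset.sum_congr rfl fun s' _ => w_invariant P g h s'
  simp [belief, hsum, w_invariant]

/-- Invariance of the History-MDP reward function: R̄(g•h, g•a) = R̄(h, a). -/
theorem Rbar_invariant {G S A Ω : Type} [Group G] [MulAction G S] [MulAction G A] [MulAction G Ω]
    [Fintype S] [Fintype A] [Fintype Ω] [Nonempty S] [Nonempty A] [Nonempty Ω]
    (P : GIPOMDP G S A Ω)
    (g : G) (h : Hist A Ω) (a : A) :
    Rbar P (histAct g h) (g • a) = Rbar P h a := by
  unfold Rbar
  rw [← Equiv.sum_comp (MulAction.toPerm g : Equiv.Perm S)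
    (fun s => (belief P (histAct g h) s : ℝ) * P.R s (g • a))]
  refine Finset.sum_congr rfl fun s _ => ?_
  simp [MulAction.toPerm_apply, belief_invariant, P.R_inv]
end

section
/- Group transforms of Bellman fixed points are Bellman fixed points: for a group-invariant POMDP, if Q : H × A → ℝ is bounded and satisfies the Bellman optimality equation Q = BQ, then for every g ∈ G the function Q_g defined by Q_g(h,a) := Q(g•h, g•a) is bounded and also satisfies Q_g = B Q_g. -/
/-!
Invariance of `b0`, `O0`, `T` and `O` makes the filter weights equivariant,
`w_{g•h}(g•s) = w_h(s)`, by induction on the history; hence beliefs, observation probabilities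
and expected rewards are invariant. Reindexing the sum over observations and the maximum over
actions by `g` then shows that the Bellman operator commutes with `Q ↦ Q_g`, so it carries
fixed points to fixed points.
-/

open scoped NNReal

variable {G S A Ω : Type} [Group G] [MulAction G S] [MulAction G A] [MulAction G Ω]
  [Fintype S] [Fintype A] [Fintype Ω]

lemma Finset.sup'_univ_comp_equiv {α β γ : Type*} [Fintype α] [Fintype β] [Nonempty α]
    [Nonempty β] [SemilatticeSup γ] (e : α ≃ β) (f : β → γ) :
    univ.sup' univ_nonempty (f ∘ e) = univ.sup' univ_nonempty f := by
  simpa [univ_map_equiv_to_embedding] using sup'_comp_eq_map f univ_nonempty (f := e.toEmbedding)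

lemma snocH_histAct_smul {G A Ω : Type} [Group G] [MulAction G A] [MulAction G Ω] (g : G)
    (h : Hist A Ω) (a : A) (o : Ω) :
    snocH (histAct g h) (g • a) (g • o) = histAct g (snocH h a o) := by
  simp [snocH, histAct]

section Invariance

variable {G S A Ω : Type} [Group G] [MulAction G S] [MulAction G A] [MulAction G Ω]
  [Fintype S] [Fintype A] [Fintype Ω] (P : GIPOMDP G S A Ω) (g : G)

lemma wRev_smul (o0 : Ω) (l : List (A × Ω)) (s : S) :
    wRev P (g • o0) (l.map fun p => (g • p.1, g • p.2)) (g • s) = wRev P o0 l s := by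
  induction l generalizing s with
  | nil => simp only [List.map_nil, wRev, P.b0_inv, P.O0_inv]
  | cons p rest ih =>
    simp only [List.map_cons, wRev, P.O_inv]
    congr 1
    exact (Fintype.sum_equiv (MulAction.toPerm g) _ _ fun s₁ => by
      simp only [MulAction.toPerm_apply, ih, P.T_inv]).symm

lemma w_histAct_smul (h : Hist A Ω) (s : S) : w P (histAct g h) (g • s) = w P h s := by
  simpa only [w, histAct, List.map_reverse] using wRev_smul P g h.1 h.2.reverse s

lemma sum_w_histAct (h : Hist A Ω) : ∑ s, w P (histAct g h) s = ∑ s, w P h s :=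
  (Fintype.sum_equiv (MulAction.toPerm g) _ _ fun s => (w_histAct_smul P g h s).symm).symm

lemma belief_histAct_smul (h : Hist A Ω) (s : S) :
    belief P (histAct g h) (g • s) = belief P h s := by
  simp only [belief, sum_w_histAct, w_histAct_smul]

lemma probObs_histAct_smul (h : Hist A Ω) (a : A) (o : Ω) :
    probObs P (histAct g h) (g • a) (g • o) = probObs P h a o := by
  refine (Fintype.sum_equiv (MulAction.toPerm g) _ _ fun s => ?_).symm
  rw [MulAction.toPerm_apply, belief_histAct_smul]
  congr 1
  exact Fintype.sum_equiv (MulAction.toPerm g) _ _ fun s' => by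
    rw [MulAction.toPerm_apply, P.T_inv, P.O_inv]

lemma Rbar_histAct_smul (h : Hist A Ω) (a : A) :
    Rbar P (histAct g h) (g • a) = Rbar P h a :=
  (Fintype.sum_equiv (MulAction.toPerm g) _ _ fun s => by
    rw [MulAction.toPerm_apply, belief_histAct_smul, P.R_inv]).symm

lemma bellman_comp_smul [Nonempty A] (γ : ℝ) (Q : Hist A Ω × A → ℝ) :
    bellman P γ (fun x => Q (histAct g x.1, g • x.2)) =
      fun x => bellman P γ Q (histAct g x.1, g • x.2) := by
  funext ⟨h, a⟩
  simp only [bellman, Rbar_histAct_smul]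
  congr 2
  refine Fintype.sum_equiv (MulAction.toPerm g) _ _ fun o => ?_
  rw [MulAction.toPerm_apply, probObs_histAct_smul, snocH_histAct_smul]
  congr 1
  exact Finset.sup'_univ_comp_equiv (MulAction.toPerm g)
    (fun a' => Q (histAct g (snocH h a o), a'))

end Invariance

theorem bellman_fixedPoint_smul_general {G S A Ω : Type} [Group G] [MulAction G S] [MulAction G A] [MulAction G Ω]
    [Fintype S] [Fintype A] [Fintype Ω] [Nonempty A]
    (P : GIPOMDP G S A Ω)
    (γ : ℝ)
    (Q : Hist A Ω × A → ℝ) (hBdd : ∃ C : ℝ, ∀ x : Hist A Ω × A, |Q x| ≤ C)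
    (hFix : Q = bellman P γ Q) :
    ∀ g : G,
      (∃ C : ℝ, ∀ x : Hist A Ω × A, |Q (histAct g x.1, g • x.2)| ≤ C) ∧
        (fun x : Hist A Ω × A => Q (histAct g x.1, g • x.2)) =
          bellman P γ (fun x : Hist A Ω × A => Q (histAct g x.1, g • x.2)) := by
  intro g
  obtain ⟨C, hC⟩ := hBdd
  refine ⟨⟨C, fun x => hC _⟩, ?_⟩
  rw [bellman_comp_smul, ← hFix]

/-- Group transforms of Bellman fixed points are Bellman fixed points: if `Q` is bounded
and `Q = BQ`, then for every `g` the function `Q_g(h,a) := Q(g•h, g•a)` is bounded and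
satisfies `Q_g = B Q_g`. -/
theorem bellman_fixedPoint_smul {G S A Ω : Type} [Group G] [MulAction G S] [MulAction G A] [MulAction G Ω]
    [Fintype S] [Fintype A] [Fintype Ω] [Nonempty S] [Nonempty A] [Nonempty Ω]
    (P : GIPOMDP G S A Ω)
    (γ : ℝ) (hγ0 : 0 ≤ γ) (hγ1 : γ < 1)
    (Q : Hist A Ω × A → ℝ) (hBdd : ∃ C : ℝ, ∀ x : Hist A Ω × A, |Q x| ≤ C)
    (hFix : Q = bellman P γ Q) :
    ∀ g : G,
      (∃ C : ℝ, ∀ x : Hist A Ω × A, |Q (histAct g x.1, g • x.2)| ≤ C) ∧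
        (fun x : Hist A Ω × A => Q (histAct g x.1, g • x.2)) =
          bellman P γ (fun x : Hist A Ω × A => Q (histAct g x.1, g • x.2)) :=
  bellman_fixedPoint_smul_general P γ Q hBdd hFix
end
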